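/- Given a (ℓ, L) Shamir secret sharing over a finite field F with |F| > L, any set of fewer than ℓ shares is consistent with every possible secret: for any subset S of share indices with |S| < ℓ, any assignment of share values on S, and any secret s ∈ F, there exists a polynomial of degree < ℓ with constant term s matching the given shares. -/

import Mathlib

open Polynomial Finset

/-- The secret sits at the node `0`: shift the targets by `s`, divide by the (non-zero) nodes,
interpolate, and multiply back by `X`. -/
theorem exists_degree_lt_card_succ_coeff_zero_eq_eval_eq {F ι : Type*} [Field F] [DecidableEq ι]
    (S : Finset ι) {x : ι → F} (hx : Set.InjOn x S) (hx0 : ∀ i ∈ S, x i ≠ 0) (r : ι → F)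
    (s : F) :
    ∃ p : F[X], p.degree < (#S + 1 : ℕ) ∧ p.coeff 0 = s ∧ ∀ i ∈ S, p.eval (x i) = r i := by
  set q := Lagrange.interpolate S x fun i => (r i - s) / x i
  have hq : q.degree < #S := Lagrange.degree_interpolate_lt _ hx
  refine ⟨C s + q * X, ?_, by simp, fun i hi => ?_⟩
  · refine (degree_add_le _ _).trans_lt (max_lt ?_ ?_)
    · exact degree_C_le.trans_lt (by exact_mod_cast Nat.succ_pos _)
    · rw [degree_mul_X, Nat.cast_succ]
      exact WithBot.add_lt_add_right WithBot.one_ne_bot hq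
  · rw [eval_add, eval_C, eval_mul, eval_X, Lagrange.eval_interpolate_at_node _ hx hi,
      div_mul_cancel₀ _ (hx0 i hi), add_sub_cancel]

theorem stmt_10_general {F : Type*} [Field F] (L ℓ : ℕ)
    (α : Fin L → F) (hinj : Function.Injective α) (hne : ∀ j, α j ≠ 0)
    (S : Finset (Fin L)) (hS : S.card < ℓ)
    (v : Fin L → F) (s : F) :
    ∃ p : Polynomial F, p.degree < (ℓ : WithBot ℕ) ∧ p.coeff 0 = s ∧
      ∀ j ∈ S, p.eval (α j) = v j := by
  obtain ⟨p, hdeg, hs, hv⟩ :=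
    exists_degree_lt_card_succ_coeff_zero_eq_eval_eq S hinj.injOn (fun j _ => hne j) v s
  exact ⟨p, hdeg.trans_le (by exact_mod_cast hS), hs, hv⟩

/-- Shamir secret sharing: fewer than ℓ shares are consistent with every
secret — there is a polynomial of degree < ℓ with constant term s matching
any assignment of shares on a set S with |S| < ℓ. -/
theorem stmt_10 {F : Type*} [Field F] [Fintype F] (L ℓ : ℕ)
    (hF : L < Fintype.card F)
    (α : Fin L → F) (hinj : Function.Injective α) (hne : ∀ j, α j ≠ 0)
    (S : Finset (Fin L)) (hS : S.card < ℓ)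
    (v : Fin L → F) (s : F) :
    ∃ p : Polynomial F, p.degree < (ℓ : WithBot ℕ) ∧ p.coeff 0 = s ∧
      ∀ j ∈ S, p.eval (α j) = v j :=
  stmt_10_general L ℓ α hinj hne S hS v s
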